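/- Let X be a compactum. Then sX ∘ μX = κX ∘ s_{DX} ∘ I(sX) as maps I(IX) → DX; explicitly, for every idempotent measure N on the compactum IX and every x ∈ X, inf{N(π_φ) : φ ∈ C(X,(-∞,0]) with φ(x) = 0} = max{f(x) + s_{DX}(I(sX)(N))(f) : f ∈ DX}. -/

import Mathlib

/-- An idempotent (Maslov) probability measure on `X`:
a functional on `C(X, ℝ)` preserving constants, translation by constants,
and finite maxima. -/
def IsIdempotentMeasure {X : Type*} [TopologicalSpace X] (μ : C(X, ℝ) → ℝ) : Prop :=
  μ 1 = 1 ∧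
  (∀ (l : ℝ) (φ : C(X, ℝ)), μ (ContinuousMap.const X l + φ) = l + μ φ) ∧
  (∀ ψ φ : C(X, ℝ), μ (ψ ⊔ φ) = max (μ ψ) (μ φ))
/-- Membership in `DX`: an upper semicontinuous function `X → [-∞, 0]`
attaining the maximal value `0`. -/
def MemD {X : Type*} [TopologicalSpace X] (f : X → EReal) : Prop :=
  UpperSemicontinuous f ∧ (∀ x, f x ≤ 0) ∧ ∃ x, f x = 0
/-- The space `DX` of densities. -/
structure Dspace (X : Type*) [TopologicalSpace X] where
  toFun : X → EReal
  memD : MemD toFun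

/-- The topology on `DX` generated by the subbase of sets
`S₋(A,t) = {f : f(a) < t for all a ∈ A}` (`A` closed, `t ∈ [-∞,0]`) and
`S₊(U,t) = {f : f(a) > t for some a ∈ U}` (`U` open, `t ∈ [-∞,0]`). -/
instance (X : Type*) [TopologicalSpace X] : TopologicalSpace (Dspace X) :=
  TopologicalSpace.generateFrom
    ({S | ∃ (A : Set X) (t : EReal), IsClosed A ∧ t ≤ 0 ∧
        S = {f : Dspace X | ∀ a ∈ A, f.toFun a < t}} ∪
     {S | ∃ (U : Set X) (t : EReal), IsOpen U ∧ t ≤ 0 ∧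
        S = {f : Dspace X | ∃ a ∈ U, t < f.toFun a}})
/-- The space `IX` of idempotent measures, topologized as a subspace of `ℝ^{C(X)}`. -/
abbrev IspX (X : Type*) [TopologicalSpace X] := {μ : C(X, ℝ) → ℝ // IsIdempotentMeasure μ}
/-- The density `sX(μ)` of a functional `μ`:
`sX(μ)(x) = inf { μ(φ) : φ ∈ C(X,(-∞,0]), φ(x) = 0 }`, computed in `ℝ ∪ {-∞}`. -/
noncomputable def sFun {X : Type*} [TopologicalSpace X] (μ : C(X, ℝ) → ℝ) (x : X) : EReal :=
  ⨅ φ : {φ : C(X, ℝ) // (∀ y, φ y ≤ 0) ∧ φ x = 0}, ((μ φ.1 : ℝ) : EReal)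
/-- For `φ ∈ C(X)`, the evaluation `π_φ : IX → ℝ`, `π_φ(ν) = ν(φ)`,
as a continuous map. -/
noncomputable def piEval {X : Type*} [TopologicalSpace X] (φ : C(X, ℝ)) :
    C(IspX X, ℝ) :=
  ⟨fun μ => μ.1 φ, (continuous_apply φ).comp continuous_subtype_val⟩

/-!
For `f ∈ DX` and `φ ≤ 0` with `φ x = 0`, the map `g ↦ max (g + φ)` on `DX` is continuous: it is
lower semicontinuous by the sets `S₊` and, since `X` is compact, upper semicontinuous by the
sets `S₋`. Truncated and shifted by `f x`, it is a test function at `f` for `I(sX)(N)`, and on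
the image of `sX` it lies below `π_φ - f x`, because `max (sX(ν) + φ) ≤ ν(φ)`. Hence
`f x + s(I(sX)(N))(f) ≤ N(π_φ)`.

Conversely, let the right-hand side be `< t`. Splitting `t` between `sX(ν)(x)` and
`s(I(sX)(N))(sX ν)` gives, for every `ν ∈ IX`, a test function `φ` at `x` and `h ∈ C(IX)` with
`N(h) < t` and `π_φ < h` near `ν`. By compactness of `IX` finitely many such neighbourhoods
cover `IX`; the infimum of their `φ`'s is a test function at `x` with `π_φ ≤ max h`, so
`N(π_φ) ≤ max N(h) < t` as `N` preserves maxima.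
-/

open Topology

namespace IsIdempotentMeasure

variable {X : Type*} [TopologicalSpace X] {μ : C(X, ℝ) → ℝ}

theorem mono (hμ : IsIdempotentMeasure μ) : Monotone μ := fun φ ψ h =>
  (le_max_left _ _).trans_eq (by rw [← hμ.2.2, sup_eq_right.mpr h])

theorem map_const (hμ : IsIdempotentMeasure μ) (c : ℝ) : μ (ContinuousMap.const X c) = c := by
  have h1 := hμ.2.1 1 0
  have hc := hμ.2.1 c 0
  rw [add_zero] at hc
  rw [show ContinuousMap.const X (1 : ℝ) + 0 = 1 by ext; simp, hμ.1] at h1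
  linarith

theorem map_zero (hμ : IsIdempotentMeasure μ) : μ 0 = 0 := hμ.map_const 0

theorem map_finset_sup' (hμ : IsIdempotentMeasure μ) {ι : Type*} {T : Finset ι}
    (hT : T.Nonempty) (φ : ι → C(X, ℝ)) : μ (T.sup' hT φ) = T.sup' hT fun i => μ (φ i) := by
  induction hT using Finset.Nonempty.cons_induction with
  | singleton i => simp
  | cons i T hi hT ih => rw [Finset.sup'_cons hT, Finset.sup'_cons hT, hμ.2.2, ih]

theorem comp (hμ : IsIdempotentMeasure μ) {Y : Type*} [TopologicalSpace Y] (f : C(X, Y)) :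
    IsIdempotentMeasure fun ψ : C(Y, ℝ) => μ (ψ.comp f) :=
  ⟨hμ.1, fun l ψ => hμ.2.1 l (ψ.comp f), fun ψ φ => hμ.2.2 (ψ.comp f) (φ.comp f)⟩

theorem dirac (x : X) : IsIdempotentMeasure fun φ : C(X, ℝ) => φ x :=
  ⟨rfl, fun _ _ => rfl, fun _ _ => rfl⟩

theorem mem_Icc_norm [CompactSpace X] (hμ : IsIdempotentMeasure μ) (φ : C(X, ℝ)) :
    μ φ ∈ Set.Icc (-‖φ‖) ‖φ‖ := by
  constructor
  · simpa [hμ.map_const] using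
      hμ.mono (show ContinuousMap.const X (-‖φ‖) ≤ φ from fun y =>
        neg_le_of_abs_le (φ.norm_coe_le_norm y))
  · simpa [hμ.map_const] using
      hμ.mono (show φ ≤ ContinuousMap.const X ‖φ‖ from fun y =>
        le_of_abs_le (φ.norm_coe_le_norm y))

theorem isClosed_setOf : IsClosed {μ : C(X, ℝ) → ℝ | IsIdempotentMeasure μ} := by
  simp only [IsIdempotentMeasure, Set.ofPred_and, Set.ofPred_forall]
  refine (isClosed_eq (continuous_apply _) continuous_const).inter (IsClosed.inter ?_ ?_)
  · exact isClosed_iInter fun l => isClosed_iInter fun φ =>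
      isClosed_eq (continuous_apply _) (continuous_const.add (continuous_apply _))
  · exact isClosed_iInter fun ψ => isClosed_iInter fun φ =>
      isClosed_eq (continuous_apply _) ((continuous_apply ψ).max (continuous_apply φ))

end IsIdempotentMeasure

instance {X : Type*} [TopologicalSpace X] [CompactSpace X] : CompactSpace (IspX X) :=
  isCompact_iff_compactSpace.mp <|
    (isCompact_univ_pi fun φ : C(X, ℝ) => isCompact_Icc (a := -‖φ‖) (b := ‖φ‖)).of_isClosed_subset
      IsIdempotentMeasure.isClosed_setOf fun _ hμ φ _ => IsIdempotentMeasure.mem_Icc_norm hμ φ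

theorem EReal.exists_lt_lt_add_eq_of_add_lt {u v : EReal} {t : ℝ} (hu : u ≠ ⊤) (hv : v ≠ ⊤)
    (h : u + v < t) : ∃ a b : ℝ, u < a ∧ v < b ∧ a + b = t := by
  obtain ⟨a, hua, hat⟩ :=
    EReal.lt_iff_exists_real_btwn.mp ((EReal.lt_sub_iff_add_lt (.inr hu) (.inl hv)).mpr h)
  refine ⟨a, t - a, hua, ?_, by ring⟩
  rw [EReal.coe_sub,
    EReal.lt_sub_iff_add_lt (.inl (EReal.coe_ne_bot a)) (.inl (EReal.coe_ne_top a)), add_comm]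
  exact EReal.add_lt_of_lt_sub hat

theorem EReal.max_min_ne_bot_and_ne_top (e : EReal) (m M : ℝ) :
    (e ⊔ m) ⊓ M ≠ ⊥ ∧ (e ⊔ m) ⊓ M ≠ ⊤ := by
  have hm : ((min m M : ℝ) : EReal) ≤ (e ⊔ m) ⊓ M :=
    le_inf (le_sup_of_le_right (by exact_mod_cast min_le_left m M))
      (by exact_mod_cast min_le_right m M)
  exact ⟨((EReal.bot_lt_coe _).trans_le hm).ne', (inf_le_right.trans_lt (EReal.coe_lt_top M)).ne⟩

theorem EReal.coe_toReal_max_min (e : EReal) (m M : ℝ) :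
    (((e ⊔ m) ⊓ M).toReal : EReal) = (e ⊔ m) ⊓ M :=
  EReal.coe_toReal (e.max_min_ne_bot_and_ne_top m M).2 (e.max_min_ne_bot_and_ne_top m M).1

theorem EReal.continuous_toReal_max_min (m M : ℝ) :
    Continuous fun e : EReal => ((e ⊔ m) ⊓ M).toReal :=
  EReal.continuousOn_toReal.comp_continuous
    ((continuous_id.max continuous_const).min continuous_const) fun e => by
      simp [e.max_min_ne_bot_and_ne_top m M]

namespace Dspace

variable {X : Type*} [TopologicalSpace X]

theorem toFun_le_zero (g : Dspace X) (y : X) : g.toFun y ≤ 0 := g.memD.2.1 y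

theorem eventually_forall_lt {A : Set X} (hA : IsClosed A) {g₀ : Dspace X} {t : EReal}
    (h : ∀ a ∈ A, g₀.toFun a < t) : ∀ᶠ g in 𝓝 g₀, ∀ a ∈ A, g.toFun a < t := by
  by_cases ht : t ≤ 0
  · exact (TopologicalSpace.isOpen_generateFrom_of_mem (Or.inl ⟨A, t, hA, ht, rfl⟩)).mem_nhds h
  · exact .of_forall fun g a _ => (g.toFun_le_zero a).trans_lt (not_le.mp ht)

theorem eventually_exists_lt {U : Set X} (hU : IsOpen U) {g₀ : Dspace X} {t : EReal}
    (h : ∃ a ∈ U, t < g₀.toFun a) : ∀ᶠ g in 𝓝 g₀, ∃ a ∈ U, t < g.toFun a := by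
  have ht : t ≤ 0 := by
    obtain ⟨a, -, ha⟩ := h
    exact ha.le.trans (g₀.toFun_le_zero a)
  exact (TopologicalSpace.isOpen_generateFrom_of_mem (Or.inr ⟨U, t, hU, ht, rfl⟩)).mem_nhds h

/-- `g.maxPlus φ = max (g + φ)` is the value at `φ` of the idempotent measure with density `g`. -/
noncomputable def maxPlus (g : Dspace X) (φ : C(X, ℝ)) : EReal :=
  ⨆ y, g.toFun y + φ y

theorem le_maxPlus (g : Dspace X) (φ : C(X, ℝ)) (y : X) : g.toFun y + φ y ≤ g.maxPlus φ :=
  le_iSup (fun y => g.toFun y + φ y) y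

theorem lowerSemicontinuous_maxPlus (φ : C(X, ℝ)) :
    LowerSemicontinuous fun g : Dspace X => g.maxPlus φ := by
  intro g₀ a ha
  obtain ⟨y, hy⟩ := lt_iSup_iff.mp ha
  obtain ⟨c, hac, hc⟩ := EReal.lt_iff_exists_real_btwn.mp hy
  have hU : IsOpen {w | a < ((c - φ y + φ w : ℝ) : EReal)} :=
    isOpen_lt continuous_const (continuous_coe_real_ereal.comp (continuous_const.add φ.continuous))
  have hy' : ∃ w ∈ {w | a < ((c - φ y + φ w : ℝ) : EReal)}, ((c - φ y : ℝ) : EReal) < g₀.toFun w :=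
    ⟨y, by rwa [Set.mem_ofPred_eq, sub_add_cancel], EReal.sub_lt_of_lt_add hc⟩
  filter_upwards [eventually_exists_lt hU hy'] with g ⟨w, hw, hgw⟩
  calc a < ((c - φ y + φ w : ℝ) : EReal) := hw
    _ < g.toFun w + φ w := by rw [EReal.coe_add]; exact EReal.add_lt_add_right_coe hgw _
    _ ≤ g.maxPlus φ := g.le_maxPlus φ w

theorem upperSemicontinuous_maxPlus [CompactSpace X] (φ : C(X, ℝ)) :
    UpperSemicontinuous fun g : Dspace X => g.maxPlus φ := by
  intro g₀ a ha
  obtain ⟨c, hc, hca⟩ := EReal.lt_iff_exists_real_btwn.mp ha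
  obtain ⟨d, hcd, hda⟩ := EReal.lt_iff_exists_real_btwn.mp hca
  replace hcd : c < d := EReal.coe_lt_coe_iff.mp hcd
  set δ := (d - c) / 2
  have hd : d = c + 2 * δ := by simp only [δ]; ring
  have key : ∀ y, ∀ᶠ p : Dspace X × X in 𝓝 (g₀, y), p.1.toFun p.2 + φ p.2 < d := by
    intro y
    -- `g₀ + φ < c` on all of `X`, so a bound on `g₀` holds on a closed neighbourhood of `y`
    -- without any regularity of `X`
    have hA : ∀ w ∈ {w | φ y - δ ≤ φ w}, g₀.toFun w < ((c - φ y + δ : ℝ) : EReal) := by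
      intro w hw
      have : g₀.toFun w + φ w < c := (g₀.le_maxPlus φ w).trans_lt hc
      refine ((EReal.lt_sub_iff_add_lt (.inl (EReal.coe_ne_bot _)) (.inl (EReal.coe_ne_top _))).mpr
        this).trans_le ?_
      rw [← EReal.coe_sub, EReal.coe_le_coe_iff]
      simp only [Set.mem_ofPred_eq] at hw
      linarith
    have hδ : 0 < δ := by simp only [δ]; linarith
    have hφ : ∀ᶠ w in 𝓝 y, φ w ∈ Set.Ioo (φ y - δ) (φ y + δ) :=
      φ.continuous.continuousAt (Ioo_mem_nhds (by linarith) (by linarith))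
    filter_upwards [(eventually_forall_lt (isClosed_le continuous_const φ.continuous) hA).prod_nhds
      hφ] with ⟨g, w⟩ ⟨hg, hw⟩
    dsimp only at hg hw ⊢
    calc g.toFun w + φ w < ((c - φ y + δ : ℝ) : EReal) + φ w :=
          EReal.add_lt_add_right_coe (hg w hw.1.le) _
      _ ≤ d := by rw [← EReal.coe_add, EReal.coe_le_coe_iff]; linarith [hw.2]
  filter_upwards [isCompact_univ.eventually_forall_of_forall_eventually
    (P := fun g w => g.toFun w + φ w < (d : EReal)) fun y _ => key y] with g hg
  exact (iSup_le fun w => (hg w trivial).le).trans_lt hda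

theorem continuous_maxPlus [CompactSpace X] (φ : C(X, ℝ)) :
    Continuous fun g : Dspace X => g.maxPlus φ :=
  continuous_iff_lower_upperSemicontinuous.mpr
    ⟨lowerSemicontinuous_maxPlus φ, upperSemicontinuous_maxPlus φ⟩

theorem exists_continuous_truncation_maxPlus [CompactSpace X] (φ : C(X, ℝ)) (m r : ℝ) :
    ∃ Ψ : C(Dspace X, ℝ), (∀ g, Ψ g ≤ 0) ∧ (∀ g, (r : EReal) ≤ g.maxPlus φ → Ψ g = 0) ∧
      ∀ g (b : ℝ), m ≤ b → g.maxPlus φ ≤ (b : EReal) → Ψ g ≤ b - r := by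
  -- clamping to `[m, r]` keeps `toReal` away from `±∞`, where it is discontinuous
  refine ⟨⟨fun g => ((g.maxPlus φ ⊔ m) ⊓ r).toReal - r,
    ((EReal.continuous_toReal_max_min m r).comp (continuous_maxPlus φ)).sub continuous_const⟩,
    fun g => ?_, fun g hg => ?_, fun g b hmb hgb => ?_⟩ <;>
  simp only [ContinuousMap.coe_mk, sub_nonpos, sub_eq_zero, sub_le_sub_iff_right,
    ← EReal.coe_le_coe_iff, EReal.coe_toReal_max_min]
  · exact inf_le_right
  · rw [inf_eq_right.mpr (le_sup_of_le_left hg), EReal.toReal_coe]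
  · exact inf_le_left.trans (sup_le hgb (by exact_mod_cast hmb))

end Dspace

section sFun

variable {X : Type*} [TopologicalSpace X] {μ : C(X, ℝ) → ℝ}

theorem sFun_le_apply {φ : C(X, ℝ)} {y : X} (hφ : ∀ z, φ z ≤ 0) (hφy : φ y = 0) :
    sFun μ y ≤ μ φ :=
  iInf_le (fun ψ : {ψ : C(X, ℝ) // (∀ z, ψ z ≤ 0) ∧ ψ y = 0} => ((μ ψ.1 : ℝ) : EReal))
    ⟨φ, hφ, hφy⟩

theorem sFun_ne_top (hμ : IsIdempotentMeasure μ) (y : X) : sFun μ y ≠ ⊤ :=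
  ((sFun_le_apply (φ := 0) (fun _ => le_rfl) rfl).trans_lt
    (hμ.map_zero ▸ EReal.coe_lt_top 0)).ne

theorem sFun_add_le (hμ : IsIdempotentMeasure μ) (φ : C(X, ℝ)) (y : X) :
    sFun μ y + φ y ≤ μ φ := by
  set ψ := (φ - ContinuousMap.const X (φ y)) ⊓ 0
  have hψ : ∀ z, ψ z ≤ 0 := fun z => inf_le_right
  have hψy : ψ y = 0 := by simp [ψ]
  have hle : ContinuousMap.const X (φ y) + ψ ≤ φ := fun z => by
    have : ψ z ≤ φ z - φ y := inf_le_left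
    show φ y + ψ z ≤ φ z
    linarith
  calc sFun μ y + φ y ≤ (μ ψ : EReal) + (φ y : ℝ) := add_le_add_left (sFun_le_apply hψ hψy) _
    _ = (μ (ContinuousMap.const X (φ y) + ψ) : EReal) := by rw [hμ.2.1, add_comm, EReal.coe_add]
    _ ≤ μ φ := EReal.coe_le_coe_iff.mpr (hμ.mono hle)

theorem Dspace.maxPlus_le {g : Dspace X} (hμ : IsIdempotentMeasure μ)
    (hg : ∀ y, g.toFun y = sFun μ y) (φ : C(X, ℝ)) : g.maxPlus φ ≤ μ φ :=
  iSup_le fun y => hg y ▸ sFun_add_le hμ φ y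

end sFun

section Monad

variable {X : Type*} [TopologicalSpace X] [CompactSpace X]

theorem iSup_add_sFun_comp_le {s : C(IspX X, Dspace X)}
    (hs : ∀ (μ : IspX X) (x : X), (s μ).toFun x = sFun μ.1 x)
    {N : C(IspX X, ℝ) → ℝ} (hN : IsIdempotentMeasure N) (x : X) :
    ⨆ f : Dspace X, f.toFun x + sFun (fun Ψ : C(Dspace X, ℝ) => N (Ψ.comp s)) f ≤
      sFun (fun φ : C(X, ℝ) => N (piEval φ)) x := by
  refine iSup_le fun f => le_iInf fun ⟨φ, _, hφx⟩ => ?_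
  induction hf : f.toFun x using EReal.rec with
  | bot => simp
  | top => exact absurd (hf ▸ f.toFun_le_zero x) (by simp)
  | coe r =>
    obtain ⟨Ψ, hΨ, hΨf, hΨs⟩ := Dspace.exists_continuous_truncation_maxPlus φ (-‖φ‖) r
    have hΨf : Ψ f = 0 := hΨf f <| by
      simpa [hf, hφx] using f.le_maxPlus φ x
    have hΨs : Ψ.comp s ≤ ContinuousMap.const _ (-r) + piEval φ := fun ν => by
      have := hΨs (s ν) (ν.1 φ) (ν.2.mem_Icc_norm φ).1 (Dspace.maxPlus_le ν.2 (hs ν) φ)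
      exact this.trans_eq (neg_add_eq_sub r _).symm
    calc (r : EReal) + sFun _ f ≤ r + (N (Ψ.comp s) : EReal) :=
          add_le_add_right (sFun_le_apply hΨ hΨf) _
      _ ≤ r + ((-r + N (piEval φ) : ℝ) : EReal) := by
          gcongr
          exact (hN.mono hΨs).trans_eq (hN.2.1 _ _)
      _ = N (piEval φ) := by rw [← EReal.coe_add, add_neg_cancel_left]

theorem sFun_piEval_lt_of_forall_exists {N : C(IspX X, ℝ) → ℝ} (hN : IsIdempotentMeasure N)
    {x : X} {t : ℝ}
    (H : ∀ ν : IspX X, ∃ φ : C(X, ℝ), ((∀ y, φ y ≤ 0) ∧ φ x = 0) ∧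
      ∃ h : C(IspX X, ℝ), N h < t ∧ ν.1 φ < h ν) :
    sFun (fun φ : C(X, ℝ) => N (piEval φ)) x < t := by
  choose φ hφ h hNh hν using H
  obtain ⟨T, hT⟩ := CompactSpace.elim_nhds_subcover (fun ν => {ν' : IspX X | ν'.1 (φ ν) < h ν ν'})
    fun ν => (isOpen_lt (piEval (φ ν)).continuous (h ν).continuous).mem_nhds (hν ν)
  have hcover : ∀ ν', ∃ ν ∈ T, ν'.1 (φ ν) < h ν ν' := fun ν' => by
    simpa using hT.ge (Set.mem_univ ν')
  have hTne : T.Nonempty :=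
    let ⟨ν, hνT, _⟩ := hcover ⟨_, IsIdempotentMeasure.dirac x⟩
    ⟨ν, hνT⟩
  have hle : piEval (T.inf' hTne φ) ≤ T.sup' hTne h := fun ν' => by
    obtain ⟨ν, hνT, hlt⟩ := hcover ν'
    calc ν'.1 (T.inf' hTne φ) ≤ ν'.1 (φ ν) := ν'.2.mono (Finset.inf'_le φ hνT)
      _ ≤ h ν ν' := hlt.le
      _ ≤ T.sup' hTne h ν' := by
        rw [ContinuousMap.sup'_apply]
        exact Finset.le_sup' (fun ν => h ν ν') hνT
  have hφinf : ∀ y, T.inf' hTne φ y ≤ 0 := fun y => by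
    rw [ContinuousMap.inf'_apply]
    exact Finset.inf'_le_of_le _ hTne.choose_spec ((hφ _).1 y)
  have hφinfx : T.inf' hTne φ x = 0 := by
    rw [ContinuousMap.inf'_apply, Finset.inf'_congr hTne rfl fun ν _ => (hφ ν).2,
      Finset.inf'_const]
  calc sFun (fun φ : C(X, ℝ) => N (piEval φ)) x ≤ N (piEval (T.inf' hTne φ)) :=
        sFun_le_apply hφinf hφinfx
    _ ≤ N (T.sup' hTne h) := EReal.coe_le_coe_iff.mpr (hN.mono hle)
    _ = (T.sup' hTne fun ν => N (h ν) : ℝ) := by rw [hN.map_finset_sup']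
    _ < t := EReal.coe_lt_coe_iff.mpr ((Finset.sup'_lt_iff hTne).mpr fun ν _ => hNh ν)

theorem sFun_piEval_lt_of_iSup_lt {s : C(IspX X, Dspace X)}
    (hs : ∀ (μ : IspX X) (x : X), (s μ).toFun x = sFun μ.1 x)
    {N : C(IspX X, ℝ) → ℝ} (hN : IsIdempotentMeasure N) {x : X} {t : ℝ}
    (ht : ⨆ f : Dspace X, f.toFun x + sFun (fun Ψ : C(Dspace X, ℝ) => N (Ψ.comp s)) f < t) :
    sFun (fun φ : C(X, ℝ) => N (piEval φ)) x < t := by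
  refine sFun_piEval_lt_of_forall_exists hN fun ν => ?_
  obtain ⟨a, b, ha, hb, hab⟩ := EReal.exists_lt_lt_add_eq_of_add_lt
    (((s ν).toFun_le_zero x).trans_lt EReal.zero_lt_top).ne (sFun_ne_top (hN.comp s) (s ν))
    ((le_iSup (fun f : Dspace X => f.toFun x + sFun (fun Ψ => N (Ψ.comp s)) f) (s ν)).trans_lt ht)
  rw [hs] at ha
  obtain ⟨⟨φ, hφ⟩, hφa⟩ := iInf_lt_iff.mp ha
  obtain ⟨⟨Ψ, _, hΨν⟩, hΨb⟩ := iInf_lt_iff.mp hb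
  refine ⟨φ, hφ, ContinuousMap.const _ a + Ψ.comp s, ?_, ?_⟩
  · rw [hN.2.1, ← hab]
    exact add_lt_add_right (EReal.coe_lt_coe_iff.mp hΨb) a
  · simpa [hΨν] using EReal.coe_lt_coe_iff.mp hφa

end Monad

theorem stmt10_general {X : Type*} [TopologicalSpace X] [CompactSpace X]
    (s : C(IspX X, Dspace X))
    (hs : ∀ (μ : IspX X) (x : X), (s μ).toFun x = sFun μ.1 x)
    (N : C(IspX X, ℝ) → ℝ) (hN : IsIdempotentMeasure N) (x : X) :
    sFun (fun φ : C(X, ℝ) => N (piEval φ)) x =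
      ⨆ f : Dspace X,
        f.toFun x + sFun (fun Ψ : C(Dspace X, ℝ) => N (Ψ.comp s)) f := by
  refine le_antisymm (le_of_forall_gt_imp_ge_of_dense fun c hc => ?_)
    (iSup_add_sFun_comp_le hs hN x)
  obtain ⟨t, ht, htc⟩ := EReal.lt_iff_exists_real_btwn.mp hc
  exact ((sFun_piEval_lt_of_iSup_lt hs hN ht).trans htc).le

/-- For a compactum `X`, `sX ∘ μX = κX ∘ s_{DX} ∘ I(sX)` as maps
`I(IX) → DX`: for every idempotent measure `N` on `IX` and `x ∈ X`,
`inf{N(π_φ) : φ ∈ C(X,(-∞,0]), φ(x) = 0}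
  = max{f(x) + s_{DX}(I(sX)(N))(f) : f ∈ DX}`.
Here `s` is given by its defining formula `sX(μ)(x) = inf{μ(φ) : φ ≤ 0, φ(x) = 0}`
(a continuous map `IX → DX`), `I(sX)(N)(Ψ) = N(Ψ ∘ sX)`, and `μX(N)(φ) = N(π_φ)`. -/
theorem stmt10 {X : Type*} [TopologicalSpace X] [CompactSpace X] [T2Space X]
    (s : C(IspX X, Dspace X))
    (hs : ∀ (μ : IspX X) (x : X), (s μ).toFun x = sFun μ.1 x)
    (N : C(IspX X, ℝ) → ℝ) (hN : IsIdempotentMeasure N) (x : X) :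
    sFun (fun φ : C(X, ℝ) => N (piEval φ)) x =
      ⨆ f : Dspace X,
        f.toFun x + sFun (fun Ψ : C(Dspace X, ℝ) => N (Ψ.comp s)) f :=
  stmt10_general s hs N hN x
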